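/- arXiv:0910.2257 — 2 statements merged into one kernel-verified Lean document; each statement's English description precedes it below -/
import Mathlib

section
/- Let (p₁,p₂,p₃) and (q₁,q₂,q₃) be two triples of points on an oriented circle such that all six points p₁,p₂,p₃,q₁,q₂,q₃ are distinct, and such that for every i ≠ j in {1,2,3}, the pair {p_i, q_j} does not separate p_j from q_i on the circle (i.e., p_j and q_i lie in the same connected component of the circle with p_i and q_j removed). Then the cyclic ordering of (p₁,p₂,p₃) equals the cyclic ordering of (q₁,q₂,q₃), i.e., [p₁p₂p₃] = [q₁q₂q₃]. -/
open Real

/-- The unit circle in the plane. -/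
def unitCircle : Set (ℝ × ℝ) := {p : ℝ × ℝ | p.1 ^ 2 + p.2 ^ 2 = 1}

/-- The sign of the cyclic ordering of a triple of (distinct) points on the oriented unit
circle: `1` if `(a,b,c)` is positively (counterclockwise) ordered, `-1` otherwise. -/
noncomputable def cyclicSign (a b c : ℝ × ℝ) : ℝ :=
  if 0 < (b.1 - a.1) * (c.2 - a.2) - (b.2 - a.2) * (c.1 - a.1) then 1 else -1

/-- Every point of the unit circle has an angle in `(-π, π]`. -/
lemma circle_angle {x : ℝ × ℝ} (hx : x ∈ unitCircle) :
    ∃ θ : ℝ, -π < θ ∧ θ ≤ π ∧ x.1 = Real.cos θ ∧ x.2 = Real.sin θ := by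
  have h : x.1 ^ 2 + x.2 ^ 2 = 1 := hx
  have h1 : -1 ≤ x.1 := by nlinarith [sq_nonneg x.2, sq_nonneg (x.1 + 1)]
  have h2 : x.1 ≤ 1 := by nlinarith [sq_nonneg x.2, sq_nonneg (x.1 - 1)]
  have hsin : Real.sin (Real.arccos x.1) = Real.sqrt (1 - x.1 ^ 2) := Real.sin_arccos x.1
  have hs : Real.sqrt (1 - x.1 ^ 2) = |x.2| := by
    rw [show (1 : ℝ) - x.1 ^ 2 = x.2 ^ 2 by nlinarith, Real.sqrt_sq_eq_abs]
  by_cases hx2 : 0 ≤ x.2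
  · exact ⟨Real.arccos x.1,
      by nlinarith [Real.arccos_nonneg x.1, Real.pi_pos], Real.arccos_le_pi x.1,
      (Real.cos_arccos h1 h2).symm, by rw [hsin, hs, abs_of_nonneg hx2]⟩
  · push_neg at hx2
    refine ⟨-Real.arccos x.1, ?_, ?_, ?_, ?_⟩
    · have hle : Real.arccos x.1 ≤ π := Real.arccos_le_pi x.1
      rcases eq_or_lt_of_le hle with he | hl
      · exfalso
        have hc := Real.cos_arccos h1 h2
        rw [he, Real.cos_pi] at hc
        have : (1 : ℝ) - x.1 ^ 2 = 0 := by rw [← hc]; ring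
        rw [this, Real.sqrt_zero] at hs
        have := abs_pos.mpr (ne_of_lt hx2)
        linarith [hs ▸ this]
      · linarith
    · linarith [Real.arccos_nonneg x.1, Real.pi_pos]
    · rw [Real.cos_neg, Real.cos_arccos h1 h2]
    · rw [Real.sin_neg, hsin, hs, abs_of_neg hx2]; ring

/-- The orientation determinant of three points on the circle, in terms of angles. -/
lemma orr_eq (α β γ : ℝ) :
    (Real.cos β - Real.cos α) * (Real.sin γ - Real.sin α) -
      (Real.sin β - Real.sin α) * (Real.cos γ - Real.cos α) =
    4 * Real.sin ((β - α) / 2) * Real.sin ((γ - β) / 2) * Real.sin ((γ - α) / 2) := by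
  have h : Real.sin ((γ - β) / 2) =
      Real.sin ((γ + α) / 2) * Real.cos ((β + α) / 2) -
        Real.cos ((γ + α) / 2) * Real.sin ((β + α) / 2) := by
    rw [← Real.sin_sub]; congr 1; ring
  rw [Real.cos_sub_cos β α, Real.cos_sub_cos γ α, Real.sin_sub_sin γ α,
    Real.sin_sub_sin β α, h]
  ring

/-- `sin (δ/2)` has the sign of `δ` on `(-2π, 2π)`. -/
lemma sin_half_mul_pos {δ : ℝ} (h1 : -(2 * π) < δ) (h2 : δ < 2 * π) (h3 : δ ≠ 0) :
    0 < Real.sin (δ / 2) * δ := by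
  rcases h3.lt_or_gt with h | h
  · have hp : 0 < Real.sin (-(δ / 2)) :=
      Real.sin_pos_of_pos_of_lt_pi (by linarith) (by linarith)
    rw [Real.sin_neg] at hp
    nlinarith
  · have hp : 0 < Real.sin (δ / 2) :=
      Real.sin_pos_of_pos_of_lt_pi (by linarith) (by linarith)
    nlinarith

lemma triple {u v w : ℝ} (hu : 0 < Real.sin (u / 2) * u) (hv : 0 < Real.sin (v / 2) * v)
    (hw : 0 < Real.sin (w / 2) * w) :
    0 < 4 * Real.sin (u / 2) * Real.sin (v / 2) * Real.sin (w / 2) * (u * v * w) := by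
  nlinarith [mul_pos (mul_pos hu hv) hw]

lemma mulpos_trans {x y z w : ℝ} (h1 : 0 < x * y) (h2 : 0 < z * w) (h3 : 0 < x * z) :
    0 < y * w := by
  nlinarith [mul_pos h1 h2]

lemma iff_to_pos {x y : ℝ} (hx : x ≠ 0) (hy : y ≠ 0) (h : 0 < x ↔ 0 < y) : 0 < x * y := by
  rcases hx.lt_or_gt with h1 | h1
  · rcases hy.lt_or_gt with h2 | h2
    · exact mul_pos_of_neg_of_neg h1 h2
    · exact absurd (h.mpr h2) (by linarith)
  · exact mul_pos h1 (h.mp h1)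

/-- The chord determinant is nonzero and has constant sign on each connected component. -/
lemma comp_sign (a b y z : ℝ × ℝ)
    (hf : ∀ x ∈ unitCircle \ {a, b},
      (x.1 - a.1) * (b.2 - a.2) - (x.2 - a.2) * (b.1 - a.1) ≠ 0)
    (hz : z ∈ connectedComponentIn (unitCircle \ {a, b}) y) :
    (0 < (y.1 - a.1) * (b.2 - a.2) - (y.2 - a.2) * (b.1 - a.1) ↔
      0 < (z.1 - a.1) * (b.2 - a.2) - (z.2 - a.2) * (b.1 - a.1)) := by
  set f : ℝ × ℝ → ℝ := fun x => (x.1 - a.1) * (b.2 - a.2) - (x.2 - a.2) * (b.1 - a.1)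
    with hfdef
  have hyF : y ∈ unitCircle \ {a, b} := connectedComponentIn_nonempty_iff.mp ⟨z, hz⟩
  have hys : y ∈ connectedComponentIn (unitCircle \ {a, b}) y := mem_connectedComponentIn hyF
  have hsub := connectedComponentIn_subset (unitCircle \ {a, b}) y
  have hconn : IsPreconnected (connectedComponentIn (unitCircle \ {a, b}) y) :=
    isPreconnected_connectedComponentIn
  have hcont : ContinuousOn f (connectedComponentIn (unitCircle \ {a, b}) y) := by
    apply Continuous.continuousOn; fun_prop
  constructor
  · intro hy
    by_contra hzneg
    have hz0 : f z < 0 := lt_of_le_of_ne (not_lt.mp hzneg) (hf z (hsub hz))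
    obtain ⟨x, hxs, hx0⟩ := hconn.intermediate_value₂ hz hys hcont
      (continuousOn_const (c := (0 : ℝ))) (le_of_lt hz0) (le_of_lt hy)
    exact hf x (hsub hxs) hx0
  · intro hzp
    by_contra hyneg
    have hy0 : f y < 0 := lt_of_le_of_ne (not_lt.mp hyneg) (hf y hyF)
    obtain ⟨x, hxs, hx0⟩ := hconn.intermediate_value₂ hys hz hcont
      (continuousOn_const (c := (0 : ℝ))) (le_of_lt hy0) (le_of_lt hzp)
    exact hf x (hsub hxs) hx0

/-- The chord determinant does not vanish on the circle off the chord endpoints. -/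
lemma nonvanish {a b : ℝ × ℝ} (ha : a ∈ unitCircle) (hb : b ∈ unitCircle) (hab : a ≠ b) :
    ∀ x ∈ unitCircle \ {a, b},
      (x.1 - a.1) * (b.2 - a.2) - (x.2 - a.2) * (b.1 - a.1) ≠ 0 := by
  rintro x ⟨hxc, hx⟩
  simp only [Set.mem_insert_iff, Set.mem_singleton_iff, not_or] at hx
  obtain ⟨α, hα1, hα2, ha1, ha2⟩ := circle_angle ha
  obtain ⟨θ, hθ1, hθ2, h1, h2⟩ := circle_angle hxc
  obtain ⟨β, hβ1, hβ2, hb1, hb2⟩ := circle_angle hb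
  have hθα : θ ≠ α := by
    intro h; exact hx.1 (Prod.ext (by rw [h1, ha1, h]) (by rw [h2, ha2, h]))
  have hβθ : β ≠ θ := by
    intro h; exact hx.2 (Prod.ext (by rw [h1, hb1, h]) (by rw [h2, hb2, h])).symm
  have hβα : β ≠ α := by
    intro h; exact hab (Prod.ext (by rw [ha1, hb1, h]) (by rw [ha2, hb2, h])).symm
  rw [h1, h2, ha1, ha2, hb1, hb2, orr_eq α θ β]
  have s1 := sin_half_mul_pos (δ := θ - α) (by linarith) (by linarith) (sub_ne_zero.mpr hθα)
  have s2 := sin_half_mul_pos (δ := β - θ) (by linarith) (by linarith) (sub_ne_zero.mpr hβθ)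
  have s3 := sin_half_mul_pos (δ := β - α) (by linarith) (by linarith) (sub_ne_zero.mpr hβα)
  have n1 : Real.sin ((θ - α) / 2) ≠ 0 := by intro h0; rw [h0] at s1; simp at s1
  have n2 : Real.sin ((β - θ) / 2) ≠ 0 := by intro h0; rw [h0] at s2; simp at s2
  have n3 : Real.sin ((β - α) / 2) ≠ 0 := by intro h0; rw [h0] at s3; simp at s3
  exact mul_ne_zero (mul_ne_zero (mul_ne_zero four_ne_zero n1) n2) n3

lemma combine {A01 A12 A02 B01 B12 B02 d0 d1 d2 m01 m12 m02 : ℝ}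
    (k01 : 0 < A01 * d1 * m01 * (d0 * B01 * m01))
    (k12 : 0 < A12 * d2 * m12 * (d1 * B12 * m12))
    (k02 : 0 < A02 * d2 * m02 * (d0 * B02 * m02)) :
    0 < A01 * A12 * A02 * (B01 * B12 * B02) := by
  nlinarith [mul_pos (mul_pos k01 k12) k02, sq_nonneg (d0 * d1 * d2 * m01 * m12 * m02)]

/-- If `(p₁,p₂,p₃)` and `(q₁,q₂,q₃)` are triples of points on the oriented circle, all six
points distinct, such that for all `i ≠ j` the pair `{pᵢ, qⱼ}` does not separate `pⱼ` from
`qᵢ` (they lie in the same connected component of the circle with `pᵢ, qⱼ` removed), then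
the two triples have the same cyclic ordering. -/
theorem stmt2 (p q : Fin 3 → ℝ × ℝ)
    (hp : ∀ i, p i ∈ unitCircle) (hq : ∀ i, q i ∈ unitCircle)
    (hdist : ∀ i j : Fin 3, (i ≠ j → p i ≠ p j ∧ q i ≠ q j) ∧ p i ≠ q j)
    (hsep : ∀ i j : Fin 3, i ≠ j →
      q i ∈ connectedComponentIn (unitCircle \ {p i, q j}) (p j)) :
    cyclicSign (p 0) (p 1) (p 2) = cyclicSign (q 0) (q 1) (q 2) := by
  choose A hA1 hA2 hA3 hA4 using fun i => circle_angle (hp i)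
  choose B hB1 hB2 hB3 hB4 using fun i => circle_angle (hq i)
  have hAB : ∀ i j, A i ≠ B j := by
    intro i j h
    exact (hdist i j).2 (Prod.ext (by rw [hA3, hB3, h]) (by rw [hA4, hB4, h]))
  have hAA : ∀ i j : Fin 3, i ≠ j → A i ≠ A j := by
    intro i j hij h
    exact ((hdist i j).1 hij).1 (Prod.ext (by rw [hA3, hA3, h]) (by rw [hA4, hA4, h]))
  have hBB : ∀ i j : Fin 3, i ≠ j → B i ≠ B j := by
    intro i j hij h
    exact ((hdist i j).1 hij).2 (Prod.ext (by rw [hB3, hB3, h]) (by rw [hB4, hB4, h]))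
  -- the key positivity per pair
  have key : ∀ i j : Fin 3, i ≠ j →
      0 < (A j - A i) * (B j - A j) * (B j - A i) *
        ((B i - A i) * (B j - B i) * (B j - A i)) := by
    intro i j hij
    have hiff := comp_sign (p i) (q j) (p j) (q i)
      (nonvanish (hp i) (hq j) ((hdist i j).2)) (hsep i j hij)
    rw [hA3 i, hA4 i, hA3 j, hA4 j, hB3 j, hB4 j, hB3 i, hB4 i,
      orr_eq (A i) (A j) (B j), orr_eq (A i) (B i) (B j)] at hiff
    have t1 := triple
      (sin_half_mul_pos (δ := A j - A i) (by linarith [hA1 i, hA2 i, hA1 j, hA2 j])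
        (by linarith [hA1 i, hA2 i, hA1 j, hA2 j]) (sub_ne_zero.mpr (hAA j i hij.symm)))
      (sin_half_mul_pos (δ := B j - A j) (by linarith [hA1 j, hA2 j, hB1 j, hB2 j])
        (by linarith [hA1 j, hA2 j, hB1 j, hB2 j]) (sub_ne_zero.mpr (Ne.symm (hAB j j))))
      (sin_half_mul_pos (δ := B j - A i) (by linarith [hA1 i, hA2 i, hB1 j, hB2 j])
        (by linarith [hA1 i, hA2 i, hB1 j, hB2 j]) (sub_ne_zero.mpr (Ne.symm (hAB i j))))
    have t2 := triple
      (sin_half_mul_pos (δ := B i - A i) (by linarith [hA1 i, hA2 i, hB1 i, hB2 i])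
        (by linarith [hA1 i, hA2 i, hB1 i, hB2 i]) (sub_ne_zero.mpr (Ne.symm (hAB i i))))
      (sin_half_mul_pos (δ := B j - B i) (by linarith [hB1 i, hB2 i, hB1 j, hB2 j])
        (by linarith [hB1 i, hB2 i, hB1 j, hB2 j]) (sub_ne_zero.mpr (hBB j i hij.symm)))
      (sin_half_mul_pos (δ := B j - A i) (by linarith [hA1 i, hA2 i, hB1 j, hB2 j])
        (by linarith [hA1 i, hA2 i, hB1 j, hB2 j]) (sub_ne_zero.mpr (Ne.symm (hAB i j))))
    have n1 : 4 * Real.sin ((A j - A i) / 2) * Real.sin ((B j - A j) / 2) *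
        Real.sin ((B j - A i) / 2) ≠ 0 := by
      intro h0; rw [h0] at t1; simp at t1
    have n2 : 4 * Real.sin ((B i - A i) / 2) * Real.sin ((B j - B i) / 2) *
        Real.sin ((B j - A i) / 2) ≠ 0 := by
      intro h0; rw [h0] at t2; simp at t2
    have hpos := iff_to_pos n1 n2 hiff
    exact mulpos_trans t1 t2 hpos
  have hPp := combine (key 0 1 (by decide)) (key 1 2 (by decide)) (key 0 2 (by decide))
  have tP := triple
    (sin_half_mul_pos (δ := A 1 - A 0) (by linarith [hA1 0, hA2 0, hA1 1, hA2 1])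
      (by linarith [hA1 0, hA2 0, hA1 1, hA2 1]) (sub_ne_zero.mpr (hAA 1 0 (by decide))))
    (sin_half_mul_pos (δ := A 2 - A 1) (by linarith [hA1 1, hA2 1, hA1 2, hA2 2])
      (by linarith [hA1 1, hA2 1, hA1 2, hA2 2]) (sub_ne_zero.mpr (hAA 2 1 (by decide))))
    (sin_half_mul_pos (δ := A 2 - A 0) (by linarith [hA1 0, hA2 0, hA1 2, hA2 2])
      (by linarith [hA1 0, hA2 0, hA1 2, hA2 2]) (sub_ne_zero.mpr (hAA 2 0 (by decide))))
  have tQ := triple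
    (sin_half_mul_pos (δ := B 1 - B 0) (by linarith [hB1 0, hB2 0, hB1 1, hB2 1])
      (by linarith [hB1 0, hB2 0, hB1 1, hB2 1]) (sub_ne_zero.mpr (hBB 1 0 (by decide))))
    (sin_half_mul_pos (δ := B 2 - B 1) (by linarith [hB1 1, hB2 1, hB1 2, hB2 2])
      (by linarith [hB1 1, hB2 1, hB1 2, hB2 2]) (sub_ne_zero.mpr (hBB 2 1 (by decide))))
    (sin_half_mul_pos (δ := B 2 - B 0) (by linarith [hB1 0, hB2 0, hB1 2, hB2 2])
      (by linarith [hB1 0, hB2 0, hB1 2, hB2 2]) (sub_ne_zero.mpr (hBB 2 0 (by decide))))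
  have hor : 0 < 4 * Real.sin ((A 1 - A 0) / 2) * Real.sin ((A 2 - A 1) / 2) *
      Real.sin ((A 2 - A 0) / 2) *
      (4 * Real.sin ((B 1 - B 0) / 2) * Real.sin ((B 2 - B 1) / 2) *
        Real.sin ((B 2 - B 0) / 2)) := by
    refine mulpos_trans (x := (A 1 - A 0) * (A 2 - A 1) * (A 2 - A 0))
      (z := (B 1 - B 0) * (B 2 - B 1) * (B 2 - B 0)) ?_ ?_ hPp
    · linarith [tP, mul_comm (4 * Real.sin ((A 1 - A 0) / 2) * Real.sin ((A 2 - A 1) / 2) *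
        Real.sin ((A 2 - A 0) / 2)) ((A 1 - A 0) * (A 2 - A 1) * (A 2 - A 0))]
    · linarith [tQ, mul_comm (4 * Real.sin ((B 1 - B 0) / 2) * Real.sin ((B 2 - B 1) / 2) *
        Real.sin ((B 2 - B 0) / 2)) ((B 1 - B 0) * (B 2 - B 1) * (B 2 - B 0))]
  simp only [cyclicSign]
  rw [hA3 0, hA4 0, hA3 1, hA4 1, hA3 2, hA4 2, hB3 0, hB4 0, hB3 1, hB4 1, hB3 2, hB4 2,
    orr_eq (A 0) (A 1) (A 2), orr_eq (B 0) (B 1) (B 2)]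
  split_ifs with h1 h2 h2
  · rfl
  · exfalso; nlinarith [hor, not_lt.mp h2]
  · exfalso; nlinarith [hor, not_lt.mp h1]
  · rfl
end

section
/- Let d be the intrinsic (arc-length) distance on a circle C of total length 2π, and let p, q ∈ C be at distance 2π/n along the positive orientation (n ≥ 3). Define h: C → ℝ² by h(x) = (d(p,x), d(q,x)). Then the signed area enclosed by the closed curve h equals 2·(2π/n)·(π − 2π/n), and consequently, summing over n equally spaced points p₁,…,p_n with the map f = (d(p₁,·),…,d(p_n,·)): C → ℝⁿ, one has (1/2π)·Σ_{i=1}^n ∮ f_i df_{i+1} = 2π(1 − 2/n). -/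
open Real intervalIntegral

noncomputable def gg : ℝ → ℝ := fun t => ‖((t : ℝ) : AddCircle (2 * Real.pi))‖

lemma gg_periodic : Function.Periodic gg (2 * π) := by
  intro t
  simp only [gg]
  rw [AddCircle.coe_add_period]

lemma gg_eq_A {t : ℝ} (h0 : 0 ≤ t) (h1 : t ≤ π) : gg t = t := by
  rw [gg, AddCircle.norm_eq]
  rcases lt_or_eq_of_le h1 with h1' | rfl
  · have : round ((2 * π)⁻¹ * t) = 0 := by
      rw [round_eq_zero_iff]
      constructor
      · have : (0:ℝ) ≤ (2 * π)⁻¹ * t := by positivity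
        linarith
      · rw [inv_mul_eq_div, div_lt_iff₀ (by positivity)]
        linarith
    rw [this]
    push_cast
    simp [abs_of_nonneg h0]
  · have h2 : (2 * π)⁻¹ * π = 1 / 2 := by
      field_simp
    rw [h2]
    have h3 : round ((1:ℝ) / 2) = 1 := by
      rw [round_eq]
      norm_num
    rw [h3]
    push_cast
    rw [show π - 1 * (2 * π) = -π by ring, abs_neg, abs_of_nonneg pi_pos.le]

lemma gg_eq_B {t : ℝ} (h0 : -π ≤ t) (h1 : t ≤ 0) : gg t = -t := by
  rw [gg, AddCircle.norm_eq]
  have : round ((2 * π)⁻¹ * t) = 0 := by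
    rw [round_eq_zero_iff]
    constructor
    · rw [inv_mul_eq_div, le_div_iff₀ (by positivity)]
      linarith
    · have h2 : (2 * π)⁻¹ * t ≤ 0 :=
        mul_nonpos_of_nonneg_of_nonpos (by positivity) h1
      linarith
  rw [this]
  push_cast
  simp [abs_of_nonpos h1]

lemma gg_eq_C {t : ℝ} (h0 : π ≤ t) (h1 : t ≤ 2 * π) : gg t = 2 * π - t := by
  rw [gg, AddCircle.norm_eq]
  have hx1 : (1:ℝ)/2 ≤ (2 * π)⁻¹ * t := by
    rw [inv_mul_eq_div, le_div_iff₀ (by positivity)]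
    linarith
  have hx2 : (2 * π)⁻¹ * t ≤ 1 := by
    rw [inv_mul_eq_div, div_le_one (by positivity)]
    linarith
  have : round ((2 * π)⁻¹ * t) = 1 := by
    rw [round_eq, Int.floor_eq_iff]
    push_cast
    constructor <;> linarith
  rw [this]
  push_cast
  rw [abs_of_nonpos (by linarith)]
  ring

lemma gg_deriv_A {s : ℝ} (h : s ∈ Set.Ioo 0 π) : deriv gg s = 1 := by
  have he : gg =ᶠ[nhds s] id := by
    filter_upwards [Ioo_mem_nhds h.1 h.2] with t ht
    exact gg_eq_A ht.1.le ht.2.le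
  rw [he.deriv_eq, deriv_id]

lemma gg_deriv_B {s : ℝ} (h : s ∈ Set.Ioo (-π) 0) : deriv gg s = -1 := by
  have he : gg =ᶠ[nhds s] (fun t => -t) := by
    filter_upwards [Ioo_mem_nhds h.1 h.2] with t ht
    exact gg_eq_B ht.1.le ht.2.le
  rw [he.deriv_eq]
  exact (hasDerivAt_id s).neg.deriv

lemma gg_deriv_C {s : ℝ} (h : s ∈ Set.Ioo π (2 * π)) : deriv gg s = -1 := by
  have he : gg =ᶠ[nhds s] (fun t => 2 * π - t) := by
    filter_upwards [Ioo_mem_nhds h.1 h.2] with t ht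
    exact gg_eq_C ht.1.le ht.2.le
  rw [he.deriv_eq]
  have : HasDerivAt (fun t : ℝ => 2 * π - t) (-1) s := by
    simpa using (hasDerivAt_id s).const_sub (2 * π)
  exact this.deriv

lemma periodic_deriv'' {f : ℝ → ℝ} {T : ℝ} (hf : Function.Periodic f T) :
    Function.Periodic (deriv f) T := by
  intro x
  have h1 : (fun y => f (y + T)) = f := funext hf
  calc deriv f (x + T) = deriv (fun y => f (y + T)) x := (deriv_comp_add_const f T x).symm
    _ = deriv f x := by rw [h1]

lemma piece {lo hi : ℝ} (hlohi : lo ≤ hi) (F q : ℝ → ℝ) (hq : Continuous q)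
    (h : ∀ t ∈ Set.Ioo lo hi, F t = q t) :
    IntervalIntegrable F MeasureTheory.volume lo hi ∧
      ∫ t in lo..hi, F t = ∫ t in lo..hi, q t := by
  have h1 : ∀ᵐ t : ℝ ∂MeasureTheory.volume, t ≠ hi := by
    rw [MeasureTheory.ae_iff]
    simpa [Set.setOf_eq_eq_singleton] using MeasureTheory.measure_singleton hi
  have hae : ∀ᵐ t ∂MeasureTheory.volume, t ∈ Set.uIoc lo hi → F t = q t := by
    filter_upwards [h1] with t ht hmem
    rw [Set.uIoc_of_le hlohi] at hmem
    exact h t ⟨hmem.1, lt_of_le_of_ne hmem.2 ht⟩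
  constructor
  · rw [intervalIntegrable_iff]
    have hq' : MeasureTheory.IntegrableOn q (Set.uIoc lo hi) := by
      rw [← intervalIntegrable_iff]
      exact hq.intervalIntegrable lo hi
    exact hq'.congr_fun_ae ((MeasureTheory.ae_restrict_iff' measurableSet_uIoc).2
      (by filter_upwards [hae] with t ht hm; exact (ht hm).symm))
  · exact intervalIntegral.integral_congr_ae hae

lemma key_integral {c : ℝ} (hc0 : 0 < c) (hcπ : c < π) :
    ∫ t in (0:ℝ)..(2 * π), gg t * deriv gg (t - c) = 2 * c * (π - c) := by
  set F : ℝ → ℝ := fun t => gg t * deriv gg (t - c) with hF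
  have hp1 : ∀ t ∈ Set.Ioo (0:ℝ) c, F t = -t := by
    intro t ht
    show gg t * deriv gg (t - c) = -t
    have hg : gg t = t := gg_eq_A ht.1.le (by linarith [ht.2])
    have hd : deriv gg (t - c) = -1 := gg_deriv_B ⟨by linarith [ht.1], by linarith [ht.2]⟩
    rw [hg, hd]; ring
  have hp2 : ∀ t ∈ Set.Ioo c π, F t = t := by
    intro t ht
    show gg t * deriv gg (t - c) = t
    have hg : gg t = t := gg_eq_A (by linarith [ht.1]) ht.2.le
    have hd : deriv gg (t - c) = 1 := gg_deriv_A ⟨by linarith [ht.1], by linarith [ht.2]⟩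
    rw [hg, hd]; ring
  have hp3 : ∀ t ∈ Set.Ioo π (π + c), F t = 2 * π - t := by
    intro t ht
    show gg t * deriv gg (t - c) = 2 * π - t
    have hg : gg t = 2 * π - t := gg_eq_C ht.1.le (by linarith [ht.2])
    have hd : deriv gg (t - c) = 1 := gg_deriv_A ⟨by linarith [ht.1], by linarith [ht.2]⟩
    rw [hg, hd]; ring
  have hp4 : ∀ t ∈ Set.Ioo (π + c) (2 * π), F t = -(2 * π - t) := by
    intro t ht
    show gg t * deriv gg (t - c) = -(2 * π - t)
    have hg : gg t = 2 * π - t := gg_eq_C (by linarith [ht.1]) ht.2.le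
    have hd : deriv gg (t - c) = -1 := gg_deriv_C ⟨by linarith [ht.1], by linarith [ht.2]⟩
    rw [hg, hd]; ring
  have P1 := piece hc0.le F (fun t => -t) (by continuity) hp1
  have P2 := piece hcπ.le F (fun t => t) continuous_id hp2
  have P3 := piece (by linarith : π ≤ π + c) F (fun t => 2 * π - t) (by continuity) hp3
  have P4 := piece (by linarith : π + c ≤ 2 * π) F (fun t => -(2 * π - t)) (by continuity) hp4
  have split1 : ∫ t in (0:ℝ)..(2 * π), F t =
      (∫ t in (0:ℝ)..c, F t) + (∫ t in c..π, F t) + (∫ t in π..(π + c), F t)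
        + (∫ t in (π + c)..(2 * π), F t) := by
    rw [← integral_add_adjacent_intervals (P1.1) (P2.1.trans (P3.1.trans P4.1)),
      ← integral_add_adjacent_intervals (P2.1) (P3.1.trans P4.1),
      ← integral_add_adjacent_intervals (P3.1) (P4.1)]
    ring
  rw [split1, P1.2, P2.2, P3.2, P4.2]
  have e1 : ∫ t in (0:ℝ)..c, (-t) = -(c ^ 2) / 2 := by
    rw [intervalIntegral.integral_neg, integral_id]; ring
  have e2 : ∫ t in c..π, (t : ℝ) = (π ^ 2 - c ^ 2) / 2 := integral_id
  have e3 : ∫ t in π..(π + c), (2 * π - t) = 2 * π * c - ((π + c) ^ 2 - π ^ 2) / 2 := by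
    rw [intervalIntegral.integral_sub intervalIntegrable_const intervalIntegrable_id,
      integral_id, intervalIntegral.integral_const]
    simp only [smul_eq_mul]
    ring
  have e4 : ∫ t in (π + c)..(2 * π), (-(2 * π - t)) =
      -(2 * π * (2 * π - (π + c)) - ((2 * π) ^ 2 - (π + c) ^ 2) / 2) := by
    rw [intervalIntegral.integral_neg,
      intervalIntegral.integral_sub intervalIntegrable_const intervalIntegrable_id,
      integral_id, intervalIntegral.integral_const]
    simp only [smul_eq_mul]
    ring
  rw [e1, e2, e3, e4]
  ring

/-- On the circle `C = ℝ/2πℤ` with its intrinsic (arc-length) distance, let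
`p₁, …, pₙ` (`n ≥ 3`) be equally spaced points in positive cyclic order and
`fᵢ = d(pᵢ, ·)`. Then for each `i` the signed area enclosed by the closed planar curve
`(fᵢ, fᵢ₊₁)` equals `2·(2π/n)·(π − 2π/n)` (here `pᵢ₊₁` is at distance `2π/n` from `pᵢ`
along the positive orientation), and consequently
`(1/2π)·Σᵢ ∮ fᵢ dfᵢ₊₁ = 2π(1 − 2/n)`. -/
theorem stmt16 (n : ℕ) [NeZero n] (hn : 3 ≤ n)
    (p : Fin n → ℝ) (hp : ∀ i : Fin n, p i = 2 * π * i / n)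
    (f : Fin n → ℝ → ℝ)
    (hf : ∀ i t, f i t = dist ((p i : AddCircle (2 * π))) ((t : AddCircle (2 * π)))) :
    (∀ i : Fin n,
      ∫ t in (0:ℝ)..(2 * π), f i t * deriv (f (i + 1)) t
        = 2 * (2 * π / n) * (π - 2 * π / n)) ∧
    (1 / (2 * π)) * ∑ i : Fin n, ∫ t in (0:ℝ)..(2 * π), f i t * deriv (f (i + 1)) t
      = 2 * π * (1 - 2 / n) := by
  have hnR : (0:ℝ) < n := by positivity
  have hc0 : 0 < 2 * π / n := by positivity
  have hcπ : 2 * π / n < π := by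
    rw [div_lt_iff₀ hnR]
    nlinarith [pi_pos, (show (3:ℝ) ≤ n by exact_mod_cast hn)]
  set c : ℝ := 2 * π / n with hc
  -- general fact: f j = fun t => gg (t - p j)
  have hfg : ∀ (j : Fin n) (t : ℝ), f j t = gg (t - p j) := by
    intro j t
    rw [hf, dist_eq_norm]
    rw [← AddCircle.coe_sub]
    show gg (p j - t) = gg (t - p j)
    rw [show p j - t = -(t - p j) by ring]
    simp only [gg]
    rw [AddCircle.coe_neg, norm_neg]
  have key1 : ∀ i : Fin n,
      ∫ t in (0:ℝ)..(2 * π), f i t * deriv (f (i + 1)) t = 2 * c * (π - c) := by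
    intro i
    set a : ℝ := p i with ha
    -- f (i+1) = fun t => gg (t - (a + c))
    have hsucc : f (i + 1) = fun t => gg (t - (a + c)) := by
      funext t
      rw [hfg]
      have hval : ((i + 1 : Fin n) : ℕ) = ((i : ℕ) + 1) % n := by
        rw [Fin.add_def]
        congr 1
        simp [Fin.val_one', Nat.mod_eq_of_lt (show 1 < n by omega)]
      by_cases hlt : (i : ℕ) + 1 < n
      · have : ((i + 1 : Fin n) : ℕ) = (i : ℕ) + 1 := by
          rw [hval, Nat.mod_eq_of_lt hlt]
        rw [hp, this, ha, hp i, hc]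
        congr 1
        push_cast
        field_simp
      · -- wrap-around: (i:ℕ) + 1 = n
        have heq : (i : ℕ) + 1 = n := by have := i.isLt; omega
        have hz : ((i + 1 : Fin n) : ℕ) = 0 := by
          rw [hval, heq, Nat.mod_self]
        have hac : a + c = 2 * π := by
          rw [ha, hp i, hc]
          field_simp
          rw [show ((i:ℕ):ℝ) = (n:ℝ) - 1 by
            have : ((i:ℕ) : ℝ) + 1 = (n : ℝ) := by exact_mod_cast congrArg (Nat.cast : ℕ → ℝ) heq
            linarith]
          ring
        rw [hp, hz, hac]
        push_cast
        rw [show t - 2 * π * 0 / n = (t - 2 * π) + 2 * π by ring]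
        rw [gg_periodic (t - 2 * π)]
    have hfi : f i = fun t => gg (t - a) := funext (fun t => hfg i t)
    rw [hfi, hsucc]
    set H : ℝ → ℝ := fun t => gg (t - a) * deriv (fun s => gg (s - (a + c))) t with hH
    have hHper : Function.Periodic H (2 * π) := by
      intro x
      have hg1 : gg (x + 2 * π - a) = gg (x - a) := by
        rw [show x + 2 * π - a = (x - a) + 2 * π by ring, gg_periodic]
      have hper2 : Function.Periodic (fun s => gg (s - (a + c))) (2 * π) := by
        intro s
        simp only
        rw [show s + 2 * π - (a + c) = (s - (a + c)) + 2 * π by ring, gg_periodic]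
      have hg2 := periodic_deriv'' hper2 x
      simp only [hH, hg1, hg2]
    have step1 : ∫ t in (0:ℝ)..(2 * π), H t = ∫ t in a..(a + 2 * π), H t := by
      have := hHper.intervalIntegral_add_eq 0 a
      simpa using this
    have step2 : ∫ t in a..(a + 2 * π), H t = ∫ t in (0:ℝ)..(2 * π), H (t + a) := by
      rw [intervalIntegral.integral_comp_add_right H a]
      norm_num [add_comm]
    have step3 : ∀ t : ℝ, H (t + a) = gg t * deriv gg (t - c) := by
      intro t
      simp only [hH]
      rw [deriv_comp_sub_const]
      congr 2 <;> ring
    calc ∫ t in (0:ℝ)..(2 * π), H t = ∫ t in (0:ℝ)..(2 * π), H (t + a) := by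
          rw [step1, step2]
      _ = ∫ t in (0:ℝ)..(2 * π), gg t * deriv gg (t - c) := by
          simp_rw [step3]
      _ = 2 * c * (π - c) := key_integral hc0 hcπ
  constructor
  · intro i
    rw [key1 i]
  · have hsum : ∑ i : Fin n, ∫ t in (0:ℝ)..(2 * π), f i t * deriv (f (i + 1)) t
        = n * (2 * c * (π - c)) := by
      rw [Finset.sum_congr rfl (fun i _ => key1 i)]
      simp [Finset.card_univ, mul_comm]
    rw [hsum, hc]
    have hπ : π ≠ 0 := pi_ne_zero
    field_simp
end
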